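/- The Dipper–Donkin quantized matrix algebra Mat₂(q) is a noetherian domain, and the monomials Z11^a · Z12^b · Z21^c · Z22^d for a, b, c, d ∈ ℕ form a basis of Mat₂(q) as a K-vector space. -/

import Mathlib

noncomputable section

open FreeAlgebra MulOpposite

/-- The relations of the Dipper–Donkin quantized matrix algebra of rank 2:
`Z12·Z11 = Z11·Z12`, `Z21·Z11 = q·Z11·Z21`, `Z22·Z21 = Z21·Z22`, `Z22·Z12 = q·Z12·Z22`,
`Z21·Z12 = q·Z12·Z21`, `Z22·Z11 = Z11·Z22 + (q−1)·Z12·Z21`, where the generators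
`Z11, Z12, Z21, Z22` are the images of `0, 1, 2, 3 : Fin 4`. -/
inductive DDrel {K : Type*} [Field K] (q : K) :
    FreeAlgebra K (Fin 4) → FreeAlgebra K (Fin 4) → Prop
  | r1 : DDrel q (ι K (1 : Fin 4) * ι K (0 : Fin 4)) (ι K (0 : Fin 4) * ι K (1 : Fin 4))
  | r2 : DDrel q (ι K (2 : Fin 4) * ι K (0 : Fin 4)) (q • (ι K (0 : Fin 4) * ι K (2 : Fin 4)))
  | r3 : DDrel q (ι K (3 : Fin 4) * ι K (2 : Fin 4)) (ι K (2 : Fin 4) * ι K (3 : Fin 4))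
  | r4 : DDrel q (ι K (3 : Fin 4) * ι K (1 : Fin 4)) (q • (ι K (1 : Fin 4) * ι K (3 : Fin 4)))
  | r5 : DDrel q (ι K (2 : Fin 4) * ι K (1 : Fin 4)) (q • (ι K (1 : Fin 4) * ι K (2 : Fin 4)))
  | r6 : DDrel q (ι K (3 : Fin 4) * ι K (0 : Fin 4))
      (ι K (0 : Fin 4) * ι K (3 : Fin 4) + (q - 1) • (ι K (1 : Fin 4) * ι K (2 : Fin 4)))

/-- The Dipper–Donkin quantized matrix algebra `Mat₂(q)`: the quotient of the free
`K`-algebra on four generators by the two-sided ideal generated by the relations above. -/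
abbrev DDMat2 {K : Type*} [Field K] (q : K) := RingQuot (DDrel q)

variable {K : Type*} [Field K]

/-- The generator `Z11` of `Mat₂(q)`. -/
def Z11 (q : K) : DDMat2 q := RingQuot.mkAlgHom K (DDrel q) (ι K (0 : Fin 4))
/-- The generator `Z12` of `Mat₂(q)`. -/
def Z12 (q : K) : DDMat2 q := RingQuot.mkAlgHom K (DDrel q) (ι K (1 : Fin 4))
/-- The generator `Z21` of `Mat₂(q)`. -/
def Z21 (q : K) : DDMat2 q := RingQuot.mkAlgHom K (DDrel q) (ι K (2 : Fin 4))
/-- The generator `Z22` of `Mat₂(q)`. -/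
def Z22 (q : K) : DDMat2 q := RingQuot.mkAlgHom K (DDrel q) (ι K (3 : Fin 4))


/-!
The ordered monomials `Z11^a Z12^b Z21^c Z22^d` are matched with the monomials `X^(a,b,c,d)` of
`K[X₀, X₁, X₂, X₃]`. Left multiplication by a generator on ordered monomials is given by explicit
formulas; the same formulas define operators on the polynomial ring which satisfy the defining
relations, hence a representation of `Mat₂(q)`. Evaluation at `1` is inverse to
`X^(a,b,c,d) ↦ Z11^a Z12^b Z21^c Z22^d`, so the ordered monomials form a basis.

For the lexicographic order each generator raises leading exponents by its unit vector, with a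
power of `q` as new leading coefficient (this is where `q ≠ 0` enters). So leading exponents add
under multiplication as in a polynomial ring: there are no zero divisors, and by Dickson's lemma
a left ideal is generated by finitely many of its elements, whose leading exponents are the
minimal ones.
-/

open MvPolynomial
open scoped MonomialOrder

theorem mul_pow_mul_eq_smul {S R : Type*} [CommSemiring S] [Semiring R] [Algebra S R]
    {g x : R} {κ : S} (h : g * x = κ • (x * g)) (n : ℕ) (r : R) :
    g * (x ^ n * r) = κ ^ n • (x ^ n * (g * r)) := by
  induction n generalizing r with
  | zero => simp
  | succ n ih =>
    rw [pow_succ, mul_assoc, ih, ← mul_assoc g, h, smul_mul_assoc, mul_smul_comm, smul_smul,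
      ← pow_succ, mul_assoc x, ← mul_assoc (x ^ n), ← pow_succ]

namespace MvPolynomial

variable {σ R M : Type*} [CommSemiring R] [AddCommMonoid M] [Module R M]

def ofMonomials (g : (σ →₀ ℕ) → M) : MvPolynomial σ R →ₗ[R] M :=
  (basisMonomials σ R).constr R g

@[simp]
theorem ofMonomials_monomial (g : (σ →₀ ℕ) → M) (d : σ →₀ ℕ) (c : R) :
    ofMonomials g (monomial d c) = c • g d := by
  rw [show monomial d c = c • basisMonomials σ R d by simp [smul_monomial], map_smul,
    ofMonomials, Module.Basis.constr_basis]

end MvPolynomial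

namespace MonomialOrder

variable {σ : Type*} (m : MonomialOrder σ)

def ShiftsDegree (T : Module.End K (MvPolynomial σ K)) (δ : σ →₀ ℕ) : Prop :=
  ∀ p, p ≠ 0 → T p ≠ 0 ∧ m.degree (T p) = m.degree p + δ

variable {m}

theorem degree_sub_leadingTerm_lt_of_ne_zero {p : MvPolynomial σ K}
    (h : p - m.leadingTerm p ≠ 0) : m.degree (p - m.leadingTerm p) ≺[m] m.degree p := by
  refine m.degree_sub_leadingTerm_lt_degree fun hp => h ?_
  rw [m.eq_C_of_degree_eq_zero hp, leadingTerm_C, sub_self]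

theorem shiftsDegree_of_monomial {T : Module.End K (MvPolynomial σ K)} {δ : σ →₀ ℕ}
    (hT : ∀ d, T (monomial d 1) ≠ 0 ∧ m.degree (T (monomial d 1)) = d + δ) :
    m.ShiftsDegree T δ := by
  intro p
  induction hs : m.toSyn (m.degree p) using WellFoundedLT.induction generalizing p with
  | ind s ih =>
  intro hp
  set ℓ := m.leadingCoeff p • monomial (m.degree p) (1 : K)
  set r := p - m.leadingTerm p
  have hTp : T p = T ℓ + T r := by
    rw [← map_add]
    congr 1
    simp only [ℓ, r, smul_monomial, smul_eq_mul, mul_one, leadingTerm, add_sub_cancel]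
  have hc : m.leadingCoeff p ≠ 0 := m.leadingCoeff_ne_zero_iff.mpr hp
  have hℓ : T ℓ ≠ 0 ∧ m.degree (T ℓ) = m.degree p + δ := by
    obtain ⟨hT0, hTdeg⟩ := hT (m.degree p)
    rw [map_smul, m.degree_smul_of_isRegular (IsRegular.of_ne_zero hc)]
    exact ⟨smul_ne_zero hc hT0, hTdeg⟩
  by_cases hr : r = 0
  · rwa [hTp, hr, map_zero, add_zero]
  have hlt := degree_sub_leadingTerm_lt_of_ne_zero hr
  have hTlt : m.degree (T r) ≺[m] m.degree (T ℓ) := by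
    rw [(ih _ (hs ▸ hlt) r rfl hr).2, hℓ.2, map_add, map_add]
    exact add_lt_add_left hlt _
  refine ⟨fun h0 => hℓ.1 ?_, by rw [hTp, m.degree_add_of_lt hTlt, hℓ.2]⟩
  rw [← m.leadingCoeff_eq_zero_iff, ← m.leadingCoeff_add_of_lt hTlt, ← hTp, h0,
    leadingCoeff_zero]

theorem ShiftsDegree.mul {T S : Module.End K (MvPolynomial σ K)} {δ ε : σ →₀ ℕ}
    (hT : m.ShiftsDegree T δ) (hS : m.ShiftsDegree S ε) : m.ShiftsDegree (T * S) (δ + ε) := by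
  intro p hp
  obtain ⟨hS0, hSdeg⟩ := hS p hp
  obtain ⟨hT0, hTdeg⟩ := hT _ hS0
  exact ⟨hT0, by rw [Module.End.mul_apply, hTdeg, hSdeg, add_assoc, add_comm ε]⟩

theorem ShiftsDegree.pow {T : Module.End K (MvPolynomial σ K)} {δ : σ →₀ ℕ}
    (hT : m.ShiftsDegree T δ) (n : ℕ) : m.ShiftsDegree (T ^ n) (n • δ) := by
  induction n with
  | zero => exact fun p hp => ⟨hp, by simp⟩
  | succ n ih => rw [pow_succ, succ_nsmul]; exact ih.mul hT

theorem withBotDegree_sub_smul_lt {f g : MvPolynomial σ K} (hf : f ≠ 0) (hg : g ≠ 0)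
    (hfg : m.degree f = m.degree g) :
    m.withBotDegree (f - (m.leadingCoeff f / m.leadingCoeff g) • g) ≺'[m]
      m.withBotDegree f := by
  set h := f - (m.leadingCoeff f / m.leadingCoeff g) • g
  rw [withBotDegree_lt_withBotDegree_iff]
  by_cases h0 : h = 0
  · exact Or.inr ⟨h0, hf⟩
  refine Or.inl (lt_of_le_of_ne ?_ fun heq => m.coeff_degree_ne_zero_iff.mpr h0 ?_)
  · refine m.degree_sub_le.trans (sup_le le_rfl (m.degree_smul_le.trans_eq ?_))
    rw [hfg]
  · rw [m.toSyn.injective heq, coeff_sub, coeff_smul, smul_eq_mul, ← leadingCoeff, hfg,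
      ← leadingCoeff, div_mul_cancel₀ _ (m.leadingCoeff_ne_zero_iff.mpr hg), sub_self]

variable {R : Type*} [Ring R] [Algebra K R]

variable (m) in
/-- In the coordinates `Φ`, left multiplication by the basis vector `Φ.symm (X^d)` raises leading
exponents by `d`, as multiplication by `X^d` does in a polynomial ring. -/
def LeftMulShiftsDegree (Φ : R ≃ₗ[K] MvPolynomial σ K) : Prop :=
  ∀ d, m.ShiftsDegree (Φ.conj (LinearMap.mulLeft K (Φ.symm (monomial d 1)))) d

namespace LeftMulShiftsDegree

variable {Φ : R ≃ₗ[K] MvPolynomial σ K}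

theorem degree_mul (h : m.LeftMulShiftsDegree Φ) {u v : R} (hu : u ≠ 0) (hv : v ≠ 0) :
    u * v ≠ 0 ∧ m.degree (Φ (u * v)) = m.degree (Φ u) + m.degree (Φ v) := by
  have hT : m.ShiftsDegree (Φ.conj (LinearMap.mulRight K v)) (m.degree (Φ v)) := by
    refine shiftsDegree_of_monomial fun d => ?_
    have hΦv : Φ v ≠ 0 := by simpa using hv
    simpa [LinearEquiv.conj_apply, add_comm d] using h d (Φ v) hΦv
  have hΦu : Φ u ≠ 0 := by simpa using hu
  simpa [LinearEquiv.conj_apply] using hT (Φ u) hΦu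

theorem noZeroDivisors (h : m.LeftMulShiftsDegree Φ) : NoZeroDivisors R where
  eq_zero_or_eq_zero_of_mul_eq_zero {u v} huv := by
    by_contra! h0
    exact (h.degree_mul h0.1 h0.2).1 huv

theorem isDomain (h : m.LeftMulShiftsDegree Φ) : IsDomain R :=
  have : Nontrivial R := Φ.toEquiv.nontrivial
  have := h.noZeroDivisors
  NoZeroDivisors.to_isDomain R

theorem eq_of_degree_le (h : m.LeftMulShiftsDegree Φ) {I J : Ideal R} (hJI : J ≤ I)
    (hdeg : ∀ f ∈ I, f ≠ 0 → ∃ g ∈ J, g ≠ 0 ∧ m.degree (Φ g) ≤ m.degree (Φ f)) :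
    J = I := by
  refine le_antisymm hJI fun f hf => ?_
  induction hs : m.toWithBotSyn (m.withBotDegree (Φ f)) using WellFoundedLT.induction
    generalizing f with
  | ind s ih =>
  by_cases hf0 : f = 0
  · rw [hf0]
    exact J.zero_mem
  obtain ⟨g, hgJ, hg0, hgf⟩ := hdeg f hf hf0
  set u := Φ.symm (monomial (m.degree (Φ f) - m.degree (Φ g)) 1)
  have hu : u ≠ 0 := by simp [u]
  obtain ⟨hug, hugdeg⟩ := h.degree_mul hu hg0
  have hdeg_eq : m.degree (Φ f) = m.degree (Φ (u * g)) := by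
    classical
    rw [hugdeg, LinearEquiv.apply_symm_apply, degree_monomial, if_neg one_ne_zero,
      tsub_add_cancel_of_le hgf]
  have hugJ : u * g ∈ J := J.mul_mem_left u hgJ
  set c := m.leadingCoeff (Φ f) / m.leadingCoeff (Φ (u * g))
  have hlt := withBotDegree_sub_smul_lt (by simpa using hf0) (by simpa using hug) hdeg_eq
  have hrest : f - c • (u * g) ∈ J := by
    refine ih _ ?_ _ (I.sub_mem hf (I.smul_of_tower_mem c (hJI hugJ))) rfl
    rw [← hs, map_sub, map_smul]
    exact hlt
  simpa using J.add_mem hrest (J.smul_of_tower_mem c hugJ)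

theorem isNoetherianRing [Finite σ] (h : m.LeftMulShiftsDegree Φ) : IsNoetherianRing R := by
  refine (isNoetherianRing_iff_ideal_fg R).mpr fun I => ?_
  set S : Set (σ →₀ ℕ) := {d | ∃ f ∈ I, f ≠ 0 ∧ m.degree (Φ f) = d}
  -- Dickson's lemma
  have hfin : {d | Minimal (· ∈ S) d}.Finite :=
    WellQuasiOrderedLE.finite_of_isAntichain (setOfPred_minimal_antichain _)
  choose! gen hgenI hgen0 hgendeg using fun d (hd : Minimal (· ∈ S) d) => hd.prop
  refine ⟨(hfin.image gen).toFinset, ?_⟩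
  rw [Set.Finite.coe_toFinset]
  refine h.eq_of_degree_le (Submodule.span_le.mpr ?_) fun f hf hf0 => ?_
  · rintro _ ⟨d, hd, rfl⟩
    exact hgenI d hd
  · obtain ⟨d, hdf, hd⟩ := exists_minimal_le_of_wellFoundedLT (· ∈ S) _ ⟨f, hf, hf0, rfl⟩
    exact ⟨gen d, Submodule.subset_span ⟨d, hd, rfl⟩, hgen0 d hd,
      (hgendeg d hd).trans_le hdf⟩

end LeftMulShiftsDegree

end MonomialOrder

namespace DDMat2

section Generators

variable (q : K)

theorem Z12_mul_Z11 : Z12 q * Z11 q = Z11 q * Z12 q := by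
  simpa [Z12, Z11] using RingQuot.mkAlgHom_rel K (DDrel.r1 (q := q))

theorem Z21_mul_Z11 : Z21 q * Z11 q = q • (Z11 q * Z21 q) := by
  simpa [Z21, Z11] using RingQuot.mkAlgHom_rel K (DDrel.r2 (q := q))

theorem Z22_mul_Z21 : Z22 q * Z21 q = Z21 q * Z22 q := by
  simpa [Z22, Z21] using RingQuot.mkAlgHom_rel K (DDrel.r3 (q := q))

theorem Z22_mul_Z12 : Z22 q * Z12 q = q • (Z12 q * Z22 q) := by
  simpa [Z22, Z12] using RingQuot.mkAlgHom_rel K (DDrel.r4 (q := q))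

theorem Z21_mul_Z12 : Z21 q * Z12 q = q • (Z12 q * Z21 q) := by
  simpa [Z21, Z12] using RingQuot.mkAlgHom_rel K (DDrel.r5 (q := q))

theorem Z22_mul_Z11 : Z22 q * Z11 q = Z11 q * Z22 q + (q - 1) • (Z12 q * Z21 q) := by
  simpa [Z11, Z12, Z21, Z22] using RingQuot.mkAlgHom_rel K (DDrel.r6 (q := q))

@[elab_as_elim]
theorem induction_on {P : DDMat2 q → Prop} (u : DDMat2 q)
    (algebraMap : ∀ r : K, P (algebraMap K (DDMat2 q) r))
    (add : ∀ u v, P u → P v → P (u + v)) (mul : ∀ u v, P u → P v → P (u * v))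
    (Z11 : P (Z11 q)) (Z12 : P (Z12 q)) (Z21 : P (Z21 q)) (Z22 : P (Z22 q)) : P u := by
  obtain ⟨f, rfl⟩ := RingQuot.mkAlgHom_surjective K (DDrel q) u
  induction f using FreeAlgebra.induction with
  | grade0 r => simpa using algebraMap r
  | grade1 i => fin_cases i; exacts [Z11, Z12, Z21, Z22]
  | mul f g hf hg => simpa using mul _ _ hf hg
  | add f g hf hg => simpa using add _ _ hf hg

def zMonomial (a b c d : ℕ) : DDMat2 q := Z11 q ^ a * (Z12 q ^ b * (Z21 q ^ c * Z22 q ^ d))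

theorem Z11_mul_zMonomial (a b c d : ℕ) :
    Z11 q * zMonomial q a b c d = zMonomial q (a + 1) b c d := by
  rw [zMonomial, ← mul_assoc, ← pow_succ', zMonomial]

theorem Z12_mul_zMonomial (a b c d : ℕ) :
    Z12 q * zMonomial q a b c d = zMonomial q a (b + 1) c d := by
  rw [zMonomial, (Commute.pow_right (Z12_mul_Z11 q) a).left_comm, ← mul_assoc (Z12 q),
    ← pow_succ', zMonomial]

theorem Z21_mul_zMonomial (a b c d : ℕ) :
    Z21 q * zMonomial q a b c d = q ^ (a + b) • zMonomial q a b (c + 1) d := by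
  rw [zMonomial, mul_pow_mul_eq_smul (Z21_mul_Z11 q), mul_pow_mul_eq_smul (Z21_mul_Z12 q),
    ← mul_assoc (Z21 q), ← pow_succ', mul_smul_comm, smul_smul, ← pow_add, zMonomial]

/-- For `a = 0` the coefficient of the second term vanishes, so the truncated `a - 1` is
harmless. -/
theorem Z22_mul_zMonomial (a b c d : ℕ) :
    Z22 q * zMonomial q a b c d = q ^ b • zMonomial q a b c (d + 1) +
      ((q ^ a - 1) * q ^ b) • zMonomial q (a - 1) (b + 1) (c + 1) d := by
  induction a with
  | zero =>
    rw [zMonomial, pow_zero, one_mul, mul_pow_mul_eq_smul (Z22_mul_Z12 q),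
      (Commute.pow_right (Z22_mul_Z21 q) c).left_comm, ← pow_succ']
    simp [zMonomial]
  | succ n ih =>
    rw [← Z11_mul_zMonomial, ← mul_assoc, Z22_mul_Z11, add_mul, smul_mul_assoc, mul_assoc,
      mul_assoc, ih, Z21_mul_zMonomial, mul_add, mul_smul_comm, mul_smul_comm, mul_smul_comm,
      Z11_mul_zMonomial, Z12_mul_zMonomial]
    rcases n with _ | n
    · simp only [pow_zero, sub_self, zero_mul, zero_smul, add_zero]
      module
    · simp only [Z11_mul_zMonomial, Nat.add_sub_cancel]
      module

end Generators

section Exponents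

def exponent (a b c d : ℕ) : Fin 4 →₀ ℕ :=
  Finsupp.single 0 a + Finsupp.single 1 b + Finsupp.single 2 c + Finsupp.single 3 d

@[simp] theorem exponent_apply_zero (a b c d : ℕ) : exponent a b c d 0 = a := by simp [exponent]
@[simp] theorem exponent_apply_one (a b c d : ℕ) : exponent a b c d 1 = b := by simp [exponent]
@[simp] theorem exponent_apply_two (a b c d : ℕ) : exponent a b c d 2 = c := by simp [exponent]
@[simp] theorem exponent_apply_three (a b c d : ℕ) : exponent a b c d 3 = d := by
  simp [exponent]

theorem exponent_eta (d : Fin 4 →₀ ℕ) : exponent (d 0) (d 1) (d 2) (d 3) = d := by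
  ext i
  fin_cases i <;> simp

theorem forall_exponent {P : (Fin 4 →₀ ℕ) → Prop} :
    (∀ d, P d) ↔ ∀ a b c d, P (exponent a b c d) :=
  ⟨fun h _ _ _ _ => h _, fun h d => exponent_eta d ▸ h _ _ _ _⟩

@[simp]
theorem exponent_add (a b c d a' b' c' d' : ℕ) :
    exponent a b c d + exponent a' b' c' d' = exponent (a + a') (b + b') (c + c') (d + d') := by
  ext i
  fin_cases i <;> simp

@[simp]
theorem nsmul_exponent (n a b c d : ℕ) :
    n • exponent a b c d = exponent (n * a) (n * b) (n * c) (n * d) := by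
  ext i
  fin_cases i <;> simp

def exponentEquiv : ℕ × ℕ × ℕ × ℕ ≃ (Fin 4 →₀ ℕ) where
  toFun x := exponent x.1 x.2.1 x.2.2.1 x.2.2.2
  invFun d := (d 0, d 1, d 2, d 3)
  left_inv x := by simp
  right_inv := exponent_eta

theorem ext_monomial_exponent {M : Type*} [AddCommMonoid M] [Module K M]
    {f g : MvPolynomial (Fin 4) K →ₗ[K] M}
    (h : ∀ a b c d, f (monomial (exponent a b c d) 1) = g (monomial (exponent a b c d) 1)) :
    f = g :=
  (basisMonomials (Fin 4) K).ext <| forall_exponent.mpr fun a b c d => by simpa using h a b c d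

end Exponents

section Representation

/-! `opZij` is the operator `Zij * ·` read on ordered monomials, with `zMonomial q a b c d`
written as the monomial of exponent `(a, b, c, d)`; compare `Z11_mul_zMonomial`, ...,
`Z22_mul_zMonomial`. -/

def opZ11 : Module.End K (MvPolynomial (Fin 4) K) :=
  ofMonomials fun d => monomial (exponent (d 0 + 1) (d 1) (d 2) (d 3)) 1

def opZ12 : Module.End K (MvPolynomial (Fin 4) K) :=
  ofMonomials fun d => monomial (exponent (d 0) (d 1 + 1) (d 2) (d 3)) 1

def opZ21 (q : K) : Module.End K (MvPolynomial (Fin 4) K) :=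
  ofMonomials fun d => q ^ (d 0 + d 1) • monomial (exponent (d 0) (d 1) (d 2 + 1) (d 3)) 1

def opZ22 (q : K) : Module.End K (MvPolynomial (Fin 4) K) :=
  ofMonomials fun d => q ^ d 1 • monomial (exponent (d 0) (d 1) (d 2) (d 3 + 1)) 1 +
    ((q ^ d 0 - 1) * q ^ d 1) • monomial (exponent (d 0 - 1) (d 1 + 1) (d 2 + 1) (d 3)) 1

def opZ (q : K) : Fin 4 → Module.End K (MvPolynomial (Fin 4) K) :=
  ![opZ11, opZ12, opZ21 q, opZ22 q]

theorem lift_opZ_rel {q : K} ⦃x y : FreeAlgebra K (Fin 4)⦄ (h : DDrel q x y) :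
    FreeAlgebra.lift K (opZ q) x = FreeAlgebra.lift K (opZ q) y := by
  induction h <;>
  · simp only [opZ, map_mul, map_smul, map_add, FreeAlgebra.lift_ι_apply]
    refine ext_monomial_exponent fun a b c d => ?_
    rcases a with _ | a <;>
    simp [opZ11, opZ12, opZ21, opZ22, Module.End.mul_apply, smul_smul] <;> first | module | ring

variable (q : K)

def rep : DDMat2 q →ₐ[K] Module.End K (MvPolynomial (Fin 4) K) :=
  RingQuot.liftAlgHom K ⟨FreeAlgebra.lift K (opZ q), lift_opZ_rel⟩

theorem rep_mkAlgHom_ι (i : Fin 4) :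
    rep q (RingQuot.mkAlgHom K (DDrel q) (ι K i)) = opZ q i := by
  rw [rep, RingQuot.liftAlgHom_mkAlgHom_apply, FreeAlgebra.lift_ι_apply]

@[simp] theorem rep_Z11 : rep q (Z11 q) = opZ11 := rep_mkAlgHom_ι q 0
@[simp] theorem rep_Z12 : rep q (Z12 q) = opZ12 := rep_mkAlgHom_ι q 1
@[simp] theorem rep_Z21 : rep q (Z21 q) = opZ21 q := rep_mkAlgHom_ι q 2
@[simp] theorem rep_Z22 : rep q (Z22 q) = opZ22 q := rep_mkAlgHom_ι q 3

def zMonomialMap : MvPolynomial (Fin 4) K →ₗ[K] DDMat2 q :=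
  ofMonomials fun d => zMonomial q (d 0) (d 1) (d 2) (d 3)

@[simp]
theorem zMonomialMap_monomial (a b c d : ℕ) :
    zMonomialMap q (monomial (exponent a b c d) 1) = zMonomial q a b c d := by
  simp [zMonomialMap]

theorem zMonomialMap_one : zMonomialMap q 1 = 1 := by
  simpa [zMonomial, exponent] using zMonomialMap_monomial q 0 0 0 0

theorem zMonomialMap_comp_rep (u : DDMat2 q) :
    zMonomialMap q ∘ₗ rep q u = LinearMap.mulLeft K u ∘ₗ zMonomialMap q := by
  induction u using induction_on with
  | algebraMap r =>
    refine LinearMap.ext fun p => ?_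
    rw [LinearMap.comp_apply, AlgHom.commutes, Module.algebraMap_end_apply, map_smul,
      Algebra.smul_def, LinearMap.comp_apply, LinearMap.mulLeft_apply]
  | add u v hu hv =>
    refine LinearMap.ext fun p => ?_
    simpa [add_mul] using
      congr_arg₂ (· + ·) (LinearMap.congr_fun hu p) (LinearMap.congr_fun hv p)
  | mul u v hu hv =>
    rw [map_mul, Module.End.mul_eq_comp, ← LinearMap.comp_assoc, hu, LinearMap.comp_assoc, hv,
      ← LinearMap.comp_assoc, LinearMap.mulLeft_mul]
  | Z11 => exact ext_monomial_exponent fun a b c d => by simp [opZ11, Z11_mul_zMonomial]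
  | Z12 => exact ext_monomial_exponent fun a b c d => by simp [opZ12, Z12_mul_zMonomial]
  | Z21 => exact ext_monomial_exponent fun a b c d => by simp [opZ21, Z21_mul_zMonomial]
  | Z22 => exact ext_monomial_exponent fun a b c d => by simp [opZ22, Z22_mul_zMonomial]

theorem zMonomialMap_rep_one (u : DDMat2 q) : zMonomialMap q (rep q u 1) = u := by
  simpa [zMonomialMap_one] using LinearMap.congr_fun (zMonomialMap_comp_rep q u) 1

theorem rep_zMonomial_one (a b c d : ℕ) :
    rep q (zMonomial q a b c d) 1 = monomial (exponent a b c d) 1 := by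
  have hW (n : ℕ) :
      (opZ22 q ^ n) (monomial (exponent 0 0 0 0) 1) = monomial (exponent 0 0 0 n) 1 := by
    induction n with
    | zero => simp
    | succ n ih => rw [pow_succ', Module.End.mul_apply, ih]; simp [opZ22]
  have hZ (n : ℕ) :
      (opZ21 q ^ n) (monomial (exponent 0 0 0 d) 1) = monomial (exponent 0 0 n d) 1 := by
    induction n with
    | zero => simp
    | succ n ih => rw [pow_succ', Module.End.mul_apply, ih]; simp [opZ21]
  have hY (n : ℕ) :
      (opZ12 ^ n) (monomial (exponent 0 0 c d) 1) = monomial (exponent 0 n c d) (1 : K) := by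
    induction n with
    | zero => simp
    | succ n ih => rw [pow_succ', Module.End.mul_apply, ih]; simp [opZ12]
  have hX (n : ℕ) :
      (opZ11 ^ n) (monomial (exponent 0 b c d) 1) = monomial (exponent n b c d) (1 : K) := by
    induction n with
    | zero => simp
    | succ n ih => rw [pow_succ', Module.End.mul_apply, ih]; simp [opZ11]
  have h1 : (1 : MvPolynomial (Fin 4) K) = monomial (exponent 0 0 0 0) 1 := by simp [exponent]
  simp only [zMonomial, map_mul, map_pow, rep_Z11, rep_Z12, rep_Z21, rep_Z22,
    Module.End.mul_apply, h1, hW, hZ, hY, hX]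

def toMvPolynomial : DDMat2 q ≃ₗ[K] MvPolynomial (Fin 4) K :=
  LinearEquiv.ofLinearMap (LinearMap.applyₗ 1 ∘ₗ (rep q).toLinearMap) (zMonomialMap q)
    (ext_monomial_exponent fun a b c d => by simpa using rep_zMonomial_one q a b c d)
    (LinearMap.ext fun u => by simpa using zMonomialMap_rep_one q u)

theorem toMvPolynomial_apply (u : DDMat2 q) : toMvPolynomial q u = rep q u 1 := rfl

@[simp]
theorem toMvPolynomial_symm_monomial (a b c d : ℕ) :
    (toMvPolynomial q).symm (monomial (exponent a b c d) 1) = zMonomial q a b c d :=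
  zMonomialMap_monomial q a b c d

theorem toMvPolynomial_conj_mulLeft (u : DDMat2 q) :
    (toMvPolynomial q).conj (LinearMap.mulLeft K u) = rep q u := by
  refine LinearMap.ext fun p => ?_
  rw [LinearEquiv.conj_apply_apply, toMvPolynomial_apply, LinearMap.mulLeft_apply, map_mul,
    Module.End.mul_apply, ← toMvPolynomial_apply, LinearEquiv.apply_symm_apply]

end Representation

section LeadingTerms

open MonomialOrder

variable {q : K}

theorem shiftsDegree_opZ11 : lex.ShiftsDegree (opZ11 (K := K)) (exponent 1 0 0 0) :=
  shiftsDegree_of_monomial <| forall_exponent.mpr fun a b c d => by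
    classical simp [opZ11, degree_monomial]

theorem shiftsDegree_opZ12 : lex.ShiftsDegree (opZ12 (K := K)) (exponent 0 1 0 0) :=
  shiftsDegree_of_monomial <| forall_exponent.mpr fun a b c d => by
    classical simp [opZ12, degree_monomial]

theorem shiftsDegree_opZ21 (hq : q ≠ 0) : lex.ShiftsDegree (opZ21 q) (exponent 0 0 1 0) :=
  shiftsDegree_of_monomial <| forall_exponent.mpr fun a b c d => by
    classical simp [opZ21, smul_monomial, degree_monomial, hq]

theorem shiftsDegree_opZ22 (hq : q ≠ 0) : lex.ShiftsDegree (opZ22 q) (exponent 0 0 0 1) := by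
  classical
  refine shiftsDegree_of_monomial <| forall_exponent.mpr fun a b c d => ?_
  rcases a with _ | a
  · simp [opZ22, smul_monomial, degree_monomial, hq]
  simp only [opZ22, ofMonomials_monomial, one_smul, exponent_apply_zero, exponent_apply_one,
    exponent_apply_two, exponent_apply_three, exponent_add, Nat.add_sub_cancel, add_zero]
  set top := q ^ b • monomial (exponent (a + 1) b c (d + 1)) (1 : K)
  have htop : lex.degree top = exponent (a + 1) b c (d + 1) := by
    simp [top, smul_monomial, degree_monomial, hq]
  have hlt : lex.degree
      (((q ^ (a + 1) - 1) * q ^ b) • monomial (exponent a (b + 1) (c + 1) d) (1 : K))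
      ≺[lex] lex.degree top := by
    refine (lex.degree_smul_le.trans (lex.degree_monomial_le 1)).trans_lt ?_
    rw [htop, lex_lt_iff, Finsupp.Lex.lt_iff]
    exact ⟨0, by simp, by simp⟩
  refine ⟨fun h0 => ?_, by rw [lex.degree_add_of_lt hlt, htop]⟩
  have hlc := lex.leadingCoeff_add_of_lt hlt
  rw [h0, leadingCoeff_zero] at hlc
  simp only [top, smul_monomial, leadingCoeff_monomial, smul_eq_mul, mul_one] at hlc
  exact pow_ne_zero b hq hlc.symm

theorem shiftsDegree_rep_zMonomial (hq : q ≠ 0) (a b c d : ℕ) :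
    lex.ShiftsDegree (rep q (zMonomial q a b c d)) (exponent a b c d) := by
  simpa [zMonomial] using (shiftsDegree_opZ11.pow a).mul ((shiftsDegree_opZ12.pow b).mul
    (((shiftsDegree_opZ21 hq).pow c).mul ((shiftsDegree_opZ22 hq).pow d)))

theorem leftMulShiftsDegree (hq : q ≠ 0) : lex.LeftMulShiftsDegree (toMvPolynomial q) :=
  forall_exponent.mpr fun a b c d => by
    rw [toMvPolynomial_symm_monomial, toMvPolynomial_conj_mulLeft]
    exact shiftsDegree_rep_zMonomial hq a b c d

end LeadingTerms

end DDMat2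

theorem DDMat2_noetherian_domain_and_monomial_basis (q : K) (hq : q ≠ 0) :
    IsNoetherianRing (DDMat2 q) ∧ IsDomain (DDMat2 q) ∧
      ∃ B : Module.Basis (ℕ × ℕ × ℕ × ℕ) K (DDMat2 q),
        ∀ a b c d : ℕ, B (a, b, c, d) = Z11 q ^ a * Z12 q ^ b * Z21 q ^ c * Z22 q ^ d := by
  have h := DDMat2.leftMulShiftsDegree hq
  refine ⟨h.isNoetherianRing, h.isDomain,
    ((basisMonomials (Fin 4) K).map (DDMat2.toMvPolynomial q).symm).reindex
      DDMat2.exponentEquiv.symm, fun a b c d => ?_⟩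
  simp [DDMat2.exponentEquiv, DDMat2.zMonomial, mul_assoc]
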